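/- arXiv:cs/0701056 — 2 statements merged into one kernel-verified Lean document; each statement's English description precedes it below -/
import Mathlib

section
/- For every natural number n and real x ≥ 0, the spherical Bessel function satisfies |j_n(x)| ≤ (√π / 2) · (1/Γ(n + 3/2)) · (x/2)^n. -/
/-!
Poisson's integral representation
`√π n! J_{n+1/2}(x) = (x/2)^{n+1/2} ∫_{-1}^{1} (1 - t²)^n cos (x t) dt`
follows by expanding `cos` termwise: integration by parts gives the moments
`∫_{-1}^{1} t^{2m} (1 - t²)^n dt = Γ(m + 1/2) n! / Γ(m + n + 3/2)`, and the half-integer values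
`Γ(m + 1/2) m! = (2m)! √π / 4^m` turn each term into the corresponding term of the Bessel series.
Bounding `|cos| ≤ 1` and using the moment with `m = 0` gives
`|J_{n+1/2}(x)| ≤ (x/2)^{n+1/2} / Γ(n + 3/2)`; the factor `√(π/(2x))` then produces the bound.
-/

/-- Bessel function of the first kind `J_ν`, defined by its power series (for `x ≥ 0`,
using real exponentiation). -/
noncomputable def besselJ (ν : ℝ) (x : ℝ) : ℝ :=
  ∑' m : ℕ, (-1 : ℝ) ^ m / ((m.factorial : ℝ) * Real.Gamma ((m : ℝ) + ν + 1))
      * (x / 2) ^ ((2 * (m : ℝ) + ν))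

/-- Spherical Bessel function of the first kind `j_n`. -/
noncomputable def sphBessel (n : ℕ) (x : ℝ) : ℝ :=
  if x = 0 then (if n = 0 then 1 else 0)
  else Real.sqrt (Real.pi / (2 * x)) * besselJ ((n : ℝ) + 1/2) x

open Real MeasureTheory intervalIntegral
open scoped Nat

theorem Real.Gamma_nat_add_half_mul_factorial (m : ℕ) :
    Gamma (m + 1 / 2) * m ! = (2 * m)! * √π / 4 ^ m := by
  induction m with
  | zero => simp [-one_div, Gamma_one_half_eq]
  | succ m ih =>
    rw [Nat.cast_succ, add_right_comm, Gamma_add_one (by positivity), Nat.factorial_succ,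
      Nat.mul_succ, Nat.factorial_succ, Nat.factorial_succ, pow_succ]
    push_cast
    rw [show (m + 1 / 2 : ℝ) * Gamma (m + 1 / 2) * ((m + 1) * m !) =
      (m + 1 / 2) * (m + 1) * (Gamma (m + 1 / 2) * m !) by ring, ih]
    field_simp
    ring

theorem integral_pow_two_mul_neg_one_one (m : ℕ) :
    ∫ t in (-1 : ℝ)..1, t ^ (2 * m) = 2 / (2 * m + 1 : ℝ) := by
  simp only [integral_pow, one_pow, Odd.neg_one_pow (odd_two_mul_add_one m)]
  push_cast
  ring

theorem integral_pow_two_mul_mul_one_sub_sq_pow_succ (m n : ℕ) :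
    (2 * m + 1 : ℝ) * ∫ t in (-1 : ℝ)..1, t ^ (2 * m) * (1 - t ^ 2) ^ (n + 1) =
      (2 * n + 2 : ℝ) * ∫ t in (-1 : ℝ)..1, t ^ (2 * (m + 1)) * (1 - t ^ 2) ^ n := by
  have hderiv (t : ℝ) : HasDerivAt (fun t ↦ t ^ (2 * m + 1) * (1 - t ^ 2) ^ (n + 1))
      ((2 * m + 1) * (t ^ (2 * m) * (1 - t ^ 2) ^ (n + 1)) -
        (2 * n + 2) * (t ^ (2 * (m + 1)) * (1 - t ^ 2) ^ n)) t := by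
    refine ((hasDerivAt_pow (2 * m + 1) t).fun_mul
      (((hasDerivAt_pow 2 t).const_sub 1).fun_pow (n + 1))).congr_deriv ?_
    push_cast
    ring
  have hcont (k l : ℕ) : IntervalIntegrable (fun t : ℝ ↦ t ^ k * (1 - t ^ 2) ^ l) volume (-1) 1 :=
    Continuous.intervalIntegrable (by fun_prop) _ _
  have hftc := integral_eq_sub_of_hasDerivAt (a := -1) (b := 1) (fun t _ ↦ hderiv t)
    (((hcont _ _).const_mul _).sub ((hcont _ _).const_mul _))
  rw [integral_sub ((hcont _ _).const_mul _) ((hcont _ _).const_mul _),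
    intervalIntegral.integral_const_mul, intervalIntegral.integral_const_mul] at hftc
  norm_num at hftc
  linarith

theorem integral_pow_two_mul_mul_one_sub_sq_pow (n m : ℕ) :
    ∫ t in (-1 : ℝ)..1, t ^ (2 * m) * (1 - t ^ 2) ^ n =
      Gamma (m + 1 / 2) * n ! / Gamma (m + n + 3 / 2) := by
  induction n generalizing m with
  | zero =>
    simp only [pow_zero, mul_one]
    rw [integral_pow_two_mul_neg_one_one, show (m + (0 : ℕ) + 3 / 2 : ℝ) =
      m + 1 / 2 + 1 by push_cast; ring, Gamma_add_one (by positivity)]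
    have hGamma := (Gamma_pos_of_pos (show (0 : ℝ) < m + 1 / 2 by positivity)).ne'
    field_simp
    simp
  | succ n ih =>
    have h := integral_pow_two_mul_mul_one_sub_sq_pow_succ m n
    rw [ih, show ((m + 1 : ℕ) + 1 / 2 : ℝ) = m + 1 / 2 + 1 by push_cast; ring,
      show ((m + 1 : ℕ) + n + 3 / 2 : ℝ) = m + (n + 1 : ℕ) + 3 / 2 by push_cast; ring,
      Gamma_add_one (by positivity)] at h
    rw [← mul_right_inj' (by positivity : (2 * m + 1 : ℝ) ≠ 0), h, Nat.factorial_succ]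
    push_cast
    ring

theorem hasSum_integral_mul_cos {f : ℝ → ℝ} (hf : IntervalIntegrable f volume (-1) 1) (x : ℝ) :
    HasSum (fun m : ℕ ↦ (-1) ^ m * x ^ (2 * m) / (2 * m)! * ∫ t in (-1 : ℝ)..1, t ^ (2 * m) * f t)
      (∫ t in (-1 : ℝ)..1, f t * cos (x * t)) := by
  have hsummable : Summable fun m : ℕ ↦ |x| ^ (2 * m) / (2 * m)! :=
    (summable_pow_div_factorial |x|).comp_injective (mul_right_injective₀ two_ne_zero)
  simp_rw [← intervalIntegral.integral_const_mul]
  refine hasSum_integral_of_dominated_convergence (fun m t ↦ |x| ^ (2 * m) / (2 * m)! * |f t|)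
    (fun m ↦ ((by fun_prop : Continuous fun t : ℝ ↦ t ^ (2 * m)).aestronglyMeasurable.mul
      hf.def'.aestronglyMeasurable).const_mul _) (fun m ↦ ae_of_all _ fun t ht ↦ ?_)
    (ae_of_all _ fun t _ ↦ hsummable.mul_right _) ?_ (ae_of_all _ fun t _ ↦ ?_)
  · rw [Set.uIoc_of_le (by norm_num)] at ht
    have ht1 : |t| ≤ 1 := abs_le.2 ⟨ht.1.le, ht.2⟩
    rw [norm_mul, norm_mul, norm_div, norm_mul, norm_pow, norm_pow, norm_pow, norm_neg, norm_one,
      one_pow, one_mul, Real.norm_natCast, ← mul_assoc]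
    exact mul_le_mul_of_nonneg_right (mul_le_of_le_one_right (by positivity)
      (pow_le_one₀ (norm_nonneg t) ht1)) (norm_nonneg _)
  · simp_rw [tsum_mul_right]
    exact hf.abs.const_mul _
  · refine ((hasSum_cos (x * t)).mul_left (f t)).congr_fun fun m ↦ ?_
    ring

theorem sqrt_pi_mul_factorial_mul_besselJ_nat_add_half (n : ℕ) {x : ℝ} (hx : 0 < x) :
    √π * n ! * besselJ (n + 1 / 2) x =
      (x / 2) ^ ((n : ℝ) + 1 / 2) * ∫ t in (-1 : ℝ)..1, (1 - t ^ 2) ^ n * cos (x * t) := by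
  rw [← (hasSum_integral_mul_cos (Continuous.intervalIntegrable (by fun_prop) _ _) x).tsum_eq,
    besselJ, ← tsum_mul_left, ← tsum_mul_left]
  refine tsum_congr fun m ↦ ?_
  have hGamma : Gamma (m + 1 / 2) = (2 * m)! * √π / 4 ^ m / m ! := by
    rw [← Gamma_nat_add_half_mul_factorial]
    field_simp
  have hGamma_ne : Gamma (m + n + 3 / 2) ≠ 0 := (Gamma_pos_of_pos (by positivity)).ne'
  rw [integral_pow_two_mul_mul_one_sub_sq_pow, hGamma, show (m + ((n : ℝ) + 1 / 2) + 1) =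
    m + n + 3 / 2 by ring, show 2 * (m : ℝ) + (n + 1 / 2) = (2 * m : ℕ) + (n + 1 / 2) by
    push_cast; ring, rpow_add (by positivity), rpow_natCast, div_pow, pow_mul, pow_mul]
  field_simp
  norm_num

theorem abs_integral_one_sub_sq_pow_mul_cos_le (n : ℕ) (x : ℝ) :
    |∫ t in (-1 : ℝ)..1, (1 - t ^ 2) ^ n * cos (x * t)| ≤ √π * n ! / Gamma (n + 3 / 2) := by
  have hmoment := integral_pow_two_mul_mul_one_sub_sq_pow n 0
  simp only [mul_zero, pow_zero, one_mul, Nat.cast_zero, zero_add, Gamma_one_half_eq] at hmoment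
  rw [← hmoment]
  refine (abs_integral_le_integral_abs (by norm_num)).trans <|
    integral_mono_on (by norm_num) (Continuous.intervalIntegrable (by fun_prop) _ _)
      (Continuous.intervalIntegrable (by fun_prop) _ _) fun t ht ↦ ?_
  have ht : 0 ≤ 1 - t ^ 2 := by nlinarith [ht.1, ht.2]
  rw [abs_mul, abs_of_nonneg (pow_nonneg ht n)]
  exact mul_le_of_le_one_right (pow_nonneg ht n) (abs_cos_le_one _)

theorem abs_besselJ_nat_add_half_le (n : ℕ) {x : ℝ} (hx : 0 < x) :
    |besselJ (n + 1 / 2) x| ≤ (x / 2) ^ ((n : ℝ) + 1 / 2) / Gamma (n + 3 / 2) := by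
  have hpos : 0 < √π * n ! := by positivity
  refine le_of_mul_le_mul_left ?_ hpos
  calc √π * n ! * |besselJ (n + 1 / 2) x|
      = (x / 2) ^ ((n : ℝ) + 1 / 2) * |∫ t in (-1 : ℝ)..1, (1 - t ^ 2) ^ n * cos (x * t)| := by
        rw [← abs_of_pos hpos, ← abs_mul, sqrt_pi_mul_factorial_mul_besselJ_nat_add_half n hx,
          abs_mul, abs_of_nonneg (by positivity)]
    _ ≤ (x / 2) ^ ((n : ℝ) + 1 / 2) * (√π * n ! / Gamma (n + 3 / 2)) :=
        mul_le_mul_of_nonneg_left (abs_integral_one_sub_sq_pow_mul_cos_le n x) (by positivity)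
    _ = √π * n ! * ((x / 2) ^ ((n : ℝ) + 1 / 2) / Gamma (n + 3 / 2)) := by ring

theorem stmt_2 (n : ℕ) (x : ℝ) (hx : 0 ≤ x) :
    |sphBessel n x| ≤
      Real.sqrt Real.pi / 2 * (1 / Real.Gamma ((n : ℝ) + 3/2)) * (x / 2) ^ n := by
  rcases hx.eq_or_lt with rfl | hx
  · rcases n with _ | n
    · have hGamma : Gamma (3 / 2) = √π / 2 := by
        rw [show (3 / 2 : ℝ) = 1 / 2 + 1 by norm_num, Gamma_add_one (by norm_num),
          Gamma_one_half_eq]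
        ring
      simp [sphBessel, hGamma, (sqrt_pos.2 pi_pos).ne']
    · simp [sphBessel]
  have hsqrt : √(π / (2 * x)) * √(x / 2) = √π / 2 := by
    rw [← sqrt_mul (by positivity), show π / (2 * x) * (x / 2) = π / 2 ^ 2 by field_simp,
      sqrt_div' _ (by positivity), sqrt_sq (by norm_num)]
  have hscale : √(π / (2 * x)) * (x / 2) ^ ((n : ℝ) + 1 / 2) = √π / 2 * (x / 2) ^ n := by
    rw [rpow_add (by positivity), rpow_natCast, ← sqrt_eq_rpow]
    linear_combination (x / 2) ^ n * hsqrt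
  calc |sphBessel n x| = √(π / (2 * x)) * |besselJ (n + 1 / 2) x| := by
        rw [sphBessel, if_neg hx.ne', abs_mul, abs_of_nonneg (sqrt_nonneg _)]
    _ ≤ √(π / (2 * x)) * ((x / 2) ^ ((n : ℝ) + 1 / 2) / Gamma (n + 3 / 2)) :=
        mul_le_mul_of_nonneg_left (abs_besselJ_nat_add_half_le n hx) (sqrt_nonneg _)
    _ = _ := by rw [mul_div_assoc', hscale]; ring
end

section
/- Let x, y > 0 be reals and P, N natural numbers with P + 1 > x and N + 1 > y. Define ε(N, P) = (x/(P+1))^P · (y/(N+1))^N. Then for all integers α, δ ≥ 1, ε(N + α, P + δ) / ε(N, P) ≤ e^{2 - α - δ}. -/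
lemma aux_ratio (a : ℝ) (ha : 0 < a) (m k : ℕ) (hk : 1 ≤ k) (hm : a < (m : ℝ) + 1) :
    (a / (((m + k : ℕ) : ℝ) + 1)) ^ (m + k) / (a / ((m : ℝ) + 1)) ^ m
      ≤ Real.exp (1 - (k : ℝ)) := by
  have hM : (0:ℝ) < (m:ℝ) + 1 := by positivity
  have hD : (0:ℝ) < (m:ℝ) + (k:ℝ) + 1 := by positivity
  have hcast : (((m + k : ℕ)) : ℝ) + 1 = (m:ℝ) + (k:ℝ) + 1 := by push_cast; ring
  rw [hcast]
  set M : ℝ := (m:ℝ) + 1 with hMdef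
  set D : ℝ := (m:ℝ) + (k:ℝ) + 1 with hDdef
  have key : (a / D) ^ (m + k) / (a / M) ^ m = (a / M) ^ k * (M / D) ^ (m + k) := by
    rw [div_pow, div_pow, div_pow, div_pow, pow_add, pow_add]
    field_simp
    ring
  rw [key]
  have h1 : (a / M) ^ k ≤ 1 := by
    apply pow_le_one₀ (by positivity)
    rw [div_le_one hM]; linarith
  have h2 : M / D ≤ Real.exp (-(k / D)) := by
    have := Real.add_one_le_exp (-(k / D))
    have hMD : M / D = 1 - (k:ℝ) / D := by field_simp [hDdef, hMdef]; ring
    rw [hMD]; linarith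
  have h3 : (M / D) ^ (m + k) ≤ Real.exp (-(k / D)) ^ (m + k) :=
    pow_le_pow_left₀ (by positivity) h2 _
  have h4 : Real.exp (-(k / D)) ^ (m + k) = Real.exp (((m + k : ℕ):ℝ) * (-(k / D))) := by
    rw [← Real.exp_nat_mul]
  have h5 : ((m + k : ℕ):ℝ) * (-(k / D)) ≤ 1 - (k:ℝ) := by
    have hkk : (1:ℝ) ≤ (k:ℝ) := by exact_mod_cast hk
    push_cast
    rw [mul_neg, neg_le, neg_sub, mul_div_assoc', le_div_iff₀ hD, hDdef]
    push_cast
    nlinarith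
  calc (a / M) ^ k * (M / D) ^ (m + k) ≤ 1 * (Real.exp (-(k / D)) ^ (m + k)) := by
        apply mul_le_mul h1 h3 (by positivity) (by norm_num)
    _ = Real.exp (((m + k : ℕ):ℝ) * (-(k / D))) := by rw [one_mul, h4]
    _ ≤ Real.exp (1 - (k:ℝ)) := Real.exp_le_exp.mpr h5

theorem stmt_6 (x y : ℝ) (hx : 0 < x) (hy : 0 < y) (P N : ℕ)
    (hP : (P : ℝ) + 1 > x) (hN : (N : ℝ) + 1 > y)
    (ε : ℕ → ℕ → ℝ)
    (hε : ∀ N' P' : ℕ, ε N' P' = (x / ((P' : ℝ) + 1)) ^ P' * (y / ((N' : ℝ) + 1)) ^ N')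
    (α δ : ℕ) (hα : 1 ≤ α) (hδ : 1 ≤ δ) :
    ε (N + α) (P + δ) / ε N P ≤ Real.exp (2 - (α : ℝ) - (δ : ℝ)) := by
  rw [hε, hε, mul_div_mul_comm]
  have hA := aux_ratio x hx P δ hδ hP
  have hB := aux_ratio y hy N α hα hN
  have hBnn : (0:ℝ) ≤ (y / (((N + α : ℕ) : ℝ) + 1)) ^ (N + α) / (y / ((N : ℝ) + 1)) ^ N := by
    positivity
  calc (x / (((P + δ : ℕ) : ℝ) + 1)) ^ (P + δ) / (x / ((P : ℝ) + 1)) ^ P *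
        ((y / (((N + α : ℕ) : ℝ) + 1)) ^ (N + α) / (y / ((N : ℝ) + 1)) ^ N)
      ≤ Real.exp (1 - (δ:ℝ)) * Real.exp (1 - (α:ℝ)) := by
        apply mul_le_mul hA hB hBnn (Real.exp_nonneg _)
    _ = Real.exp (2 - (α : ℝ) - (δ : ℝ)) := by rw [← Real.exp_add]; ring_nf
end
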